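/- Let S : M(D,H₁) → H₂ be linear and weak-* to weak continuous with finite-dimensional range, and suppose p_d ∈ Ran S. Then the dual problem max { (p_d, y)_{H₂} : y ∈ H₂, ‖S* y‖_{C(D,H₁)} ≤ 1 } admits a solution. -/

import Mathlib

/-!
The adjoint relation identifies `ker S*` with `(Ran S)ᗮ`, since continuous functionals separate
points of `C(D, H₁)`. Hence `S*` is unchanged by orthogonal projection onto the
finite-dimensional space `Ran S`, and so is `(p_d, ·)` because `p_d ∈ Ran S`: the problem reduces
to maximising a linear functional over `{y ∈ Ran S : ‖S* y‖ ≤ 1}`. There `S*` is injective,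
hence antilipschitz, so this set is compact and the maximum is attained.
-/

theorem isCompact_setOf_norm_le_of_injective {E G : Type*}
    [NormedAddCommGroup E] [NormedSpace ℝ E] [FiniteDimensional ℝ E]
    [NormedAddCommGroup G] [NormedSpace ℝ G]
    (T : E →L[ℝ] G) (hT : Function.Injective T) (c : ℝ) : IsCompact {x | ‖T x‖ ≤ c} := by
  obtain ⟨K, -, hK⟩ := T.toLinearMap.injective_iff_antilipschitz.mp hT
  have hset : {x | ‖T x‖ ≤ c} = T ⁻¹' Metric.closedBall 0 c := by ext; simp
  rw [hset]
  exact Metric.isCompact_of_isClosed_isBounded (Metric.isClosed_closedBall.preimage T.continuous)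
    (hK.isBounded_preimage Metric.isBounded_closedBall)

theorem ker_eq_orthogonal_range_of_forall_inner_eq {E F : Type*}
    [NormedAddCommGroup E] [NormedSpace ℝ E] [NormedAddCommGroup F] [InnerProductSpace ℝ F]
    (S : StrongDual ℝ E →ₗ[ℝ] F) (T : F →L[ℝ] E)
    (hdual : ∀ u y, inner ℝ (S u) y = u (T y)) :
    LinearMap.ker T.toLinearMap = (LinearMap.range S)ᗮ := by
  ext y
  simp only [LinearMap.mem_ker, ContinuousLinearMap.coe_coe, Submodule.mem_orthogonal,
    LinearMap.mem_range, forall_exists_index, forall_apply_eq_imp_iff, hdual]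
  exact ⟨fun hy u => by simp [hy], SeparatingDual.eq_zero_of_forall_dual_eq_zero⟩

theorem exists_max_inner_on_norm_le_one_of_ker_eq_orthogonal {F G : Type*}
    [NormedAddCommGroup F] [InnerProductSpace ℝ F] [NormedAddCommGroup G] [NormedSpace ℝ G]
    (K : Submodule ℝ F) [FiniteDimensional ℝ K] (T : F →L[ℝ] G)
    (hker : LinearMap.ker T.toLinearMap = Kᗮ) {p : F} (hp : p ∈ K) :
    ∃ y, ‖T y‖ ≤ 1 ∧ ∀ z, ‖T z‖ ≤ 1 → inner ℝ p z ≤ inner ℝ p y := by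
  have hinj : Function.Injective (T.comp K.subtypeL) := by
    refine (injective_iff_map_eq_zero _).mpr fun x hx => ?_
    have hx' : (x : F) ∈ K ⊓ Kᗮ := ⟨x.2, hker ▸ hx⟩
    simpa [K.inf_orthogonal_eq_bot] using hx'
  obtain ⟨x₀, hx₀, hmax⟩ := (isCompact_setOf_norm_le_of_injective _ hinj 1).exists_isMaxOn
    ⟨0, by simp⟩ ((innerSL ℝ p).continuous.comp continuous_subtype_val).continuousOn
  refine ⟨x₀, hx₀, fun z hz => ?_⟩
  have hTz : T (K.starProjection z) = T z := by
    have hker_z : z - K.starProjection z ∈ LinearMap.ker T.toLinearMap :=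
      hker ▸ K.sub_starProjection_mem_orthogonal z
    rw [LinearMap.mem_ker, map_sub, sub_eq_zero] at hker_z
    exact hker_z.symm
  have hpz : inner ℝ p (K.starProjection z) = inner ℝ p z :=
    K.inner_orthogonalProjectionOnto_eq_of_mem_left ⟨p, hp⟩ z
  rw [← hpz]
  exact hmax (a := K.orthogonalProjectionOnto z) (by simpa [hTz] using hz)

theorem dual_problem_solvable_of_finite_rank
    (D H₁ H₂ : Type*) [MetricSpace D] [CompactSpace D]
    [NormedAddCommGroup H₁] [InnerProductSpace ℝ H₁]
    [NormedAddCommGroup H₂] [InnerProductSpace ℝ H₂]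
    (S : StrongDual ℝ C(D, H₁) →ₗ[ℝ] H₂)
    (Sstar : H₂ →L[ℝ] C(D, H₁))
    (hdual : ∀ (u : StrongDual ℝ C(D, H₁)) (y : H₂),
      (inner ℝ (S u) y : ℝ) = u (Sstar y))
    [FiniteDimensional ℝ (LinearMap.range S)]
    (p_d : H₂) (hfeas : p_d ∈ LinearMap.range S) :
    ∃ y : H₂, ‖Sstar y‖ ≤ 1 ∧
      ∀ z : H₂, ‖Sstar z‖ ≤ 1 → (inner ℝ p_d z : ℝ) ≤ (inner ℝ p_d y : ℝ) :=
  exists_max_inner_on_norm_le_one_of_ker_eq_orthogonal _ Sstar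
    (ker_eq_orthogonal_range_of_forall_inner_eq S Sstar hdual) hfeas
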